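/- arXiv:2012.05756 — 5 statements merged into one kernel-verified Lean document; each statement's English description precedes it below -/
import Mathlib

section
/- Let G = (V, E) be an undirected graph on a finite vertex set V. Let π : V → ℝ be a function with π(i) > 0 for every i ∈ V and Σ_{i∈V} π(i) = 1. Then Σ_{i∈V} π(i) / (π(i) + Σ_{j : j adjacent to i} π(j)) ≤ α(G), where α(G) is the independence number of G. -/
open Finset

/-- `s` is an independent set of the simple graph `G`: no two distinct vertices of `s`
are adjacent. -/
def IsIndepSet {V : Type*} (G : SimpleGraph V) (s : Finset V) : Prop :=
  ∀ i ∈ s, ∀ j ∈ s, i ≠ j → ¬ G.Adj i j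

/-- The independence number of `G`: the maximum cardinality of an independent set. -/
noncomputable def indepNum (V : Type*) [Fintype V] (G : SimpleGraph V) : ℕ :=
  sSup {n | ∃ s : Finset V, IsIndepSet G s ∧ s.card = n}

/-!
Weighted Caro–Wei by the greedy algorithm. Write `W(i) = π i + π(N(i) ∩ s)` for the weight of
the closed neighbourhood of `i` inside the current vertex set `s`, and pick `v ∈ s` minimising
`W`. Every `i ∈ N[v]` has `W(i) ≥ W(v) = π(N[v])`, so the terms `π i / W(i)` over `N[v]` add up
to at most `1`. Removing `N[v]` from `s` only decreases `W` on the remaining vertices, so by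
induction they contribute at most the size of an independent set `t` of `s \ N[v]`, and
`insert v t` is independent.
-/

section

variable {V : Type*} {G : SimpleGraph V}

theorem IsIndepSet.insert [DecidableEq V] {t : Finset V} {v : V} (ht : IsIndepSet G t)
    (hv : ∀ u ∈ t, ¬ G.Adj v u) : IsIndepSet G (insert v t) := by
  intro i hi j hj hij
  rcases mem_insert.mp hi with rfl | hit
  · rcases mem_insert.mp hj with rfl | hjt
    · exact absurd rfl hij
    · exact hv j hjt
  · rcases mem_insert.mp hj with rfl | hjt
    · exact fun h => hv i hit h.symm
    · exact ht i hit j hjt hij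

theorem IsIndepSet.card_le_indepNum [Fintype V] {t : Finset V} (ht : IsIndepSet G t) :
    t.card ≤ indepNum V G :=
  le_csSup ⟨Fintype.card V, by rintro _ ⟨s, -, rfl⟩; exact s.card_le_univ⟩ ⟨t, ht, rfl⟩

variable [DecidableRel G.Adj] {π : V → ℝ}

def nbhdWeight (G : SimpleGraph V) [DecidableRel G.Adj] (π : V → ℝ) (s : Finset V) (i : V) :
    ℝ :=
  ∑ j ∈ s with G.Adj j i, π j

theorem nbhdWeight_nonneg (hπ : ∀ i, 0 ≤ π i) (s : Finset V) (i : V) :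
    0 ≤ nbhdWeight G π s i :=
  sum_nonneg fun j _ => hπ j

theorem nbhdWeight_mono (hπ : ∀ i, 0 ≤ π i) {s t : Finset V} (hts : t ⊆ s) (i : V) :
    nbhdWeight G π t i ≤ nbhdWeight G π s i :=
  sum_le_sum_of_subset_of_nonneg (filter_subset_filter _ hts) fun j _ _ => hπ j

theorem div_add_nbhdWeight_le_of_subset (hπ : ∀ i, 0 < π i) {s t : Finset V} (hts : t ⊆ s)
    (i : V) :
    π i / (π i + nbhdWeight G π s i) ≤ π i / (π i + nbhdWeight G π t i) :=
  div_le_div_of_nonneg_left (hπ i).le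
    (add_pos_of_pos_of_nonneg (hπ i) (nbhdWeight_nonneg (fun j => (hπ j).le) t i))
    (add_le_add le_rfl (nbhdWeight_mono (fun j => (hπ j).le) hts i))

theorem sum_closedNbhd_div_le_one [DecidableEq V] (hπ : ∀ i, 0 < π i) {s : Finset V} {v : V}
    (hv : v ∈ s) (hmin : ∀ i ∈ s, π v + nbhdWeight G π s v ≤ π i + nbhdWeight G π s i) :
    ∑ i ∈ insert v {j ∈ s | G.Adj j v}, π i / (π i + nbhdWeight G π s i) ≤ 1 := by
  set N := insert v {j ∈ s | G.Adj j v}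
  have hNs : N ⊆ s := insert_subset hv (filter_subset _ _)
  have hWv : 0 < π v + nbhdWeight G π s v :=
    add_pos_of_pos_of_nonneg (hπ v) (nbhdWeight_nonneg (fun j => (hπ j).le) s v)
  have hN : ∑ i ∈ N, π i = π v + nbhdWeight G π s v :=
    sum_insert (by simp)
  calc ∑ i ∈ N, π i / (π i + nbhdWeight G π s i)
      ≤ ∑ i ∈ N, π i / (π v + nbhdWeight G π s v) :=
        sum_le_sum fun i hi => div_le_div_of_nonneg_left (hπ i).le hWv (hmin i (hNs hi))
    _ = 1 := by rw [← sum_div, hN, div_self hWv.ne']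

theorem exists_isIndepSet_subset_sum_div_le_card [DecidableEq V] (hπ : ∀ i, 0 < π i)
    (s : Finset V) :
    ∃ t ⊆ s, IsIndepSet G t ∧
      ∑ i ∈ s, π i / (π i + nbhdWeight G π s i) ≤ t.card := by
  induction s using Finset.strongInduction with
  | _ s ih =>
  rcases s.eq_empty_or_nonempty with rfl | hs
  · exact ⟨∅, subset_rfl, by simp [IsIndepSet], by simp⟩
  obtain ⟨v, hv, hmin⟩ := s.exists_min_image (fun i => π i + nbhdWeight G π s i) hs
  set N := insert v {j ∈ s | G.Adj j v}
  have hNs : N ⊆ s := insert_subset hv (filter_subset _ _)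
  obtain ⟨t, hts, ht, hsum⟩ := ih (s \ N) (sdiff_ssubset hNs ⟨v, mem_insert_self _ _⟩)
  have hvt : ∀ u ∈ t, ¬ G.Adj v u := fun u hu hvu =>
    (mem_sdiff.mp (hts hu)).2 (mem_insert_of_mem (mem_filter.mpr
      ⟨(mem_sdiff.mp (hts hu)).1, hvu.symm⟩))
  have hvt' : v ∉ t := fun hv => (mem_sdiff.mp (hts hv)).2 (mem_insert_self _ _)
  refine ⟨insert v t, insert_subset hv (hts.trans sdiff_subset), ht.insert hvt, ?_⟩
  have hrest : ∑ i ∈ s \ N, π i / (π i + nbhdWeight G π s i) ≤ t.card :=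
    (sum_le_sum fun i _ => div_add_nbhdWeight_le_of_subset hπ sdiff_subset i).trans hsum
  rw [← sum_sdiff hNs, card_insert_of_notMem hvt', Nat.cast_succ]
  exact add_le_add hrest (sum_closedNbhd_div_le_one hπ hv hmin)

end

theorem stmt0_general {V : Type*} [Fintype V] (G : SimpleGraph V) [DecidableRel G.Adj]
    (π : V → ℝ) (hpos : ∀ i, 0 < π i) :
    ∑ i, π i / (π i + ∑ j ∈ univ.filter (fun j => G.Adj j i), π j)
      ≤ (indepNum V G : ℝ) := by
  classical
  obtain ⟨t, -, ht, hle⟩ := exists_isIndepSet_subset_sum_div_le_card (G := G) hpos univ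
  exact hle.trans (by exact_mod_cast ht.card_le_indepNum)

theorem stmt0 {V : Type*} [Fintype V] (G : SimpleGraph V) [DecidableRel G.Adj]
    (π : V → ℝ) (hpos : ∀ i, 0 < π i) (hsum : ∑ i, π i = 1) :
    ∑ i, π i / (π i + ∑ j ∈ univ.filter (fun j => G.Adj j i), π j)
      ≤ (indepNum V G : ℝ) :=
  stmt0_general G π hpos
end

section
/- Let (Ω, F, P) be a probability space and m ⊆ F a sub-σ-algebra. Let V = {1, …, K} be a finite set and d ≥ 1. Suppose: (i) π : V → Ω → ℝ is m-measurable and, pointwise in ω, a probability distribution on V; (ii) J : Ω → V is a random variable satisfying E[1{J = j} | m] = π(j) almost surely for every j ∈ V; (iii) S : V → Ω → (subsets of V) is m-measurable with j ∈ S(j)(ω) for all j and ω; (iv) θ : V → Ω → ℝ^d is m-measurable and bounded; (v) Y : Ω → ℝ^d is bounded, is independent of the σ-algebra generated by m together with J, and satisfies E[Y Yᵀ] = Σ for an invertible d×d matrix Σ; (vi) X : Ω → ℝ^d is m-measurable and bounded. Define q(i) := Σ_{j ∈ V : i ∈ S(j)} π(j), let β > 0 be a constant, and define the implicit-exploration estimator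 θ̂_i := (1{i ∈ S(J)} / (q(i) + β)) · Σ⁻¹ Y · ⟨Y, θ_i⟩. Then, almost surely, E[Σ_{i∈V} π(i) ⟨X, θ̂_i⟩ | m] = Σ_{i∈V} π(i) ⟨X, θ_i⟩ − β · Σ_{i∈V} (π(i) / (q(i) + β)) ⟨X, θ_i⟩. -/
open MeasureTheory ProbabilityTheory Finset

lemma bdd_mul'' {Ω : Type*} {f g : Ω → ℝ} (hf : ∃ C, ∀ ω, |f ω| ≤ C)
    (hg : ∃ C, ∀ ω, |g ω| ≤ C) : ∃ C, ∀ ω, |f ω * g ω| ≤ C := by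
  obtain ⟨A, hA⟩ := hf; obtain ⟨B, hB⟩ := hg
  refine ⟨max A 0 * max B 0, fun ω => ?_⟩
  rw [abs_mul]
  exact mul_le_mul ((hA ω).trans (le_max_left _ _)) ((hB ω).trans (le_max_left _ _))
    (abs_nonneg _) (le_max_right _ _)

lemma integrable_of_bdd' {Ω : Type*} {F : MeasurableSpace Ω} {μ : Measure Ω} [IsFiniteMeasure μ]
    {f : Ω → ℝ} (hf : Measurable f) (hb : ∃ C, ∀ ω, |f ω| ≤ C) : Integrable f μ := by
  obtain ⟨C, hC⟩ := hb
  exact ⟨hf.aestronglyMeasurable, HasFiniteIntegral.of_bounded (C := C)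
    (ae_of_all _ fun ω => by simpa [Real.norm_eq_abs] using hC ω)⟩

lemma keyCE {Ω : Type*} (m mJ mY : MeasurableSpace Ω) {F : MeasurableSpace Ω}
    (μ : Measure Ω) [IsProbabilityMeasure μ]
    (hm : m ≤ F) (hmJ : mJ ≤ F) (hmY : mY ≤ F)
    (hindep : Indep (m ⊔ mJ) mY μ)
    (W f g p : Ω → ℝ)
    (hW : Measurable[m] W) (hWb : ∃ C, ∀ ω, |W ω| ≤ C)
    (hf : Measurable[m ⊔ mJ] f) (hfb : ∃ C, ∀ ω, |f ω| ≤ C)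
    (hg : Measurable[mY] g) (hgb : ∃ C, ∀ ω, |g ω| ≤ C)
    (hp : Measurable[m] p) (hpb : ∃ C, ∀ ω, |p ω| ≤ C)
    (hfp : μ[f | m] =ᵐ[μ] p)
    (c : ℝ) (hgc : ∫ ω, g ω ∂μ = c) :
    μ[fun ω => W ω * (f ω * g ω) | m] =ᵐ[μ] fun ω => W ω * (p ω * c) := by
  have hmJF : m ⊔ mJ ≤ F := sup_le hm hmJ
  have hfF : Measurable[F] f := hf.mono hmJF le_rfl
  have hgF : Measurable[F] g := hg.mono hmY le_rfl
  have hWF : Measurable[F] W := hW.mono hm le_rfl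
  have hpF : Measurable[F] p := hp.mono hm le_rfl
  have hf_int : Integrable f μ := integrable_of_bdd' hfF hfb
  have hg_int : Integrable g μ := integrable_of_bdd' hgF hgb
  have hfg_int : Integrable (fun ω => f ω * g ω) μ :=
    integrable_of_bdd' (hfF.mul hgF) (bdd_mul'' hfb hgb)
  have hWfg_int : Integrable (fun ω => W ω * (f ω * g ω)) μ :=
    integrable_of_bdd' (hWF.mul (hfF.mul hgF)) (bdd_mul'' hWb (bdd_mul'' hfb hgb))
  have hpc_int : Integrable (fun ω => p ω * c) μ :=
    integrable_of_bdd' (hpF.mul measurable_const) (bdd_mul'' hpb ⟨|c|, fun _ => le_rfl⟩)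
  -- Step 1 : conditional expectation of f * g
  have h1 : (fun ω => p ω * c) =ᵐ[μ] μ[(fun ω => f ω * g ω) | m] := by
    refine ae_eq_condExp_of_forall_setIntegral_eq hm hfg_int
      (fun s _ _ => hpc_int.integrableOn) (fun s hs _ => ?_)
      (by
        have hpcm : Measurable[m] (fun ω => p ω * c) := hp.mul measurable_const
        exact hpcm.stronglyMeasurable.aestronglyMeasurable)
    have hsF : MeasurableSet[F] s := hm s hs
    have hsJ : MeasurableSet[m ⊔ mJ] s := (le_sup_left : m ≤ m ⊔ mJ) s hs
    have hind : IndepFun (s.indicator f) g μ := by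
      rw [IndepFun_iff_Indep]
      refine indep_of_indep_of_le_left (indep_of_indep_of_le_right hindep hg.comap_le) ?_
      exact (hf.indicator hsJ).comap_le
    have hif_int : Integrable (s.indicator f) μ :=
      integrable_of_bdd' (hfF.indicator hsF)
        ⟨max hfb.choose 0, fun ω => by
          by_cases h : ω ∈ s
          · simp only [Set.indicator_of_mem h]
            exact (hfb.choose_spec ω).trans (le_max_left _ _)
          · simp [Set.indicator_of_notMem h]⟩
    calc ∫ x in s, p x * c ∂μ = (∫ x in s, p x ∂μ) * c := by rw [integral_mul_const]
      _ = (∫ x in s, (μ[f | m]) x ∂μ) * c := by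
          rw [setIntegral_congr_ae hsF (hfp.symm.mono fun ω h _ => h)]
      _ = (∫ x in s, f x ∂μ) * c := by rw [setIntegral_condExp hm hf_int hs]
      _ = (∫ x, s.indicator f x ∂μ) * (∫ x, g x ∂μ) := by rw [integral_indicator hsF, hgc]
      _ = ∫ x, s.indicator f x * g x ∂μ :=
          (hind.integral_fun_mul_eq_mul_integral hif_int.aestronglyMeasurable hg_int.aestronglyMeasurable).symm
      _ = ∫ x in s, f x * g x ∂μ := by
          rw [← integral_indicator hsF]
          congr 1
          funext ω
          by_cases h : ω ∈ s <;> simp [Set.indicator_of_mem, Set.indicator_of_notMem, h]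
  -- Step 2 : pull out W
  have h2 : μ[(fun ω => W ω * (f ω * g ω)) | m] =ᵐ[μ]
      W * μ[(fun ω => f ω * g ω) | m] := by
    have := condExp_mul_of_stronglyMeasurable_left (μ := μ) hW.stronglyMeasurable
      (f := W) (g := fun ω => f ω * g ω) ?_ hfg_int
    · exact this
    · exact hWfg_int
  refine h2.trans ?_
  filter_upwards [h1] with ω hω
  simp only [Pi.mul_apply, ← hω]

lemma alg1 {V : Type*} [Fintype V] [DecidableEq V] {d : ℕ}
    (N : Matrix (Fin d) (Fin d) ℝ) (a c : V → ℝ) (x y : Fin d → ℝ)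
    (th : V → Fin d → ℝ) (e : V → V → ℝ) (jj : V) :
    ∑ i, a i * ∑ k, x k * (((e i jj / c i) * (∑ k', y k' * th i k')) • N.mulVec y) k
      = ∑ p : V × V × Fin d × Fin d × Fin d,
          (e p.2.1 p.1 * (a p.2.1 / c p.2.1) * th p.2.1 p.2.2.1 *
            (x p.2.2.2.1 * N p.2.2.2.1 p.2.2.2.2)) *
          ((if jj = p.1 then 1 else 0) * (y p.2.2.1 * y p.2.2.2.2)) := by
  simp only [Fintype.sum_prod_type]
  conv_rhs => rw [Finset.sum_comm]
  refine Finset.sum_congr rfl fun i _ => ?_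
  have h1 : ∀ j : V, (∑ k, ∑ l, ∑ n, (e i j * (a i / c i) * th i k * (x l * N l n)) *
      ((if jj = j then (1:ℝ) else 0) * (y k * y n)))
      = if jj = j then ∑ k, ∑ l, ∑ n,
          (e i j * (a i / c i) * th i k * (x l * N l n)) * (y k * y n) else 0 := by
    intro j; by_cases h : jj = j <;> simp [h]
  rw [Finset.sum_congr rfl fun j _ => h1 j, Finset.sum_ite_eq]
  simp only [Finset.mem_univ, if_true]
  conv_rhs => rw [Finset.sum_comm]
  simp only [Pi.smul_apply, smul_eq_mul, Matrix.mulVec, dotProduct]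
  rw [Finset.mul_sum]
  refine Finset.sum_congr rfl fun l _ => ?_
  rw [show a i * (x l * ((e i jj / c i * ∑ k', y k' * th i k') * ∑ n, N l n * y n))
      = (a i * x l * (e i jj / c i)) * ((∑ k', y k' * th i k') * ∑ n, N l n * y n) from by ring,
    Finset.sum_mul_sum, Finset.mul_sum]
  refine Finset.sum_congr rfl fun k _ => ?_
  rw [Finset.mul_sum]
  refine Finset.sum_congr rfl fun n _ => ?_
  ring

lemma alg2 {V : Type*} [Fintype V] [DecidableEq V] {d : ℕ}
    (N M : Matrix (Fin d) (Fin d) ℝ)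
    (hNM : ∀ k l, ∑ n, N l n * M k n = if k = l then (1:ℝ) else 0)
    (a c b : V → ℝ) (x : Fin d → ℝ) (th : V → Fin d → ℝ) (e : V → V → ℝ)
    (β : ℝ) (hc : ∀ i, c i ≠ 0) (hq' : ∀ i, ∑ j, e i j * b j = c i - β) :
    ∑ p : V × V × Fin d × Fin d × Fin d,
        (e p.2.1 p.1 * (a p.2.1 / c p.2.1) * th p.2.1 p.2.2.1 *
          (x p.2.2.2.1 * N p.2.2.2.1 p.2.2.2.2)) *
        (b p.1 * M p.2.2.1 p.2.2.2.2)
      = (∑ i, a i * ∑ k, x k * th i k)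
        - β * ∑ i, (a i / c i) * ∑ k, x k * th i k := by
  simp only [Fintype.sum_prod_type]
  conv_lhs => rw [Finset.sum_comm]
  have hstep : ∀ i : V, (∑ j, ∑ k, ∑ l, ∑ n,
      (e i j * (a i / c i) * th i k * (x l * N l n)) * (b j * M k n))
      = (c i - β) * ((a i / c i) * ∑ k, x k * th i k) := by
    intro i
    have hn : ∀ (j : V) (k l : Fin d), (∑ n, (e i j * (a i / c i) * th i k * (x l * N l n)) *
        (b j * M k n)) = (e i j * b j * ((a i / c i) * th i k) * x l) * ∑ n, N l n * M k n := by
      intro j k l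
      rw [Finset.mul_sum]
      exact Finset.sum_congr rfl fun n _ => by ring
    have hl : ∀ (j : V) (k : Fin d), (∑ l, (e i j * b j * ((a i / c i) * th i k) * x l) *
        ∑ n, N l n * M k n) = e i j * b j * ((a i / c i) * th i k) * x k := by
      intro j k
      have : ∀ l, (e i j * b j * ((a i / c i) * th i k) * x l) * ∑ n, N l n * M k n
          = if k = l then e i j * b j * ((a i / c i) * th i k) * x l else 0 := by
        intro l
        rw [hNM]
        by_cases h : k = l <;> simp [h]
      rw [Finset.sum_congr rfl fun l _ => this l, Finset.sum_ite_eq]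
      simp
    have hk : ∀ j : V, (∑ k, e i j * b j * ((a i / c i) * th i k) * x k)
        = (e i j * b j) * ((a i / c i) * ∑ k, x k * th i k) := by
      intro j
      rw [Finset.mul_sum, Finset.mul_sum]
      exact Finset.sum_congr rfl fun k _ => by ring
    calc (∑ j, ∑ k, ∑ l, ∑ n, (e i j * (a i / c i) * th i k * (x l * N l n)) * (b j * M k n))
        = ∑ j, ∑ k, e i j * b j * ((a i / c i) * th i k) * x k := by
          refine Finset.sum_congr rfl fun j _ => Finset.sum_congr rfl fun k _ => ?_
          rw [Finset.sum_congr rfl fun l _ => hn j k l, hl j k]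
      _ = ∑ j, (e i j * b j) * ((a i / c i) * ∑ k, x k * th i k) := by
          exact Finset.sum_congr rfl fun j _ => hk j
      _ = (∑ j, e i j * b j) * ((a i / c i) * ∑ k, x k * th i k) := by
          rw [Finset.sum_mul]
      _ = (c i - β) * ((a i / c i) * ∑ k, x k * th i k) := by rw [hq' i]
  rw [Finset.sum_congr rfl fun i _ => hstep i]
  rw [Finset.mul_sum, ← Finset.sum_sub_distrib]
  refine Finset.sum_congr rfl fun i _ => ?_
  field_simp [hc i]

theorem stmt5 {Ω : Type*} (m : MeasurableSpace Ω) {F : MeasurableSpace Ω} (μ : Measure Ω) [IsProbabilityMeasure μ]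
    (hm : m ≤ F)
    {V : Type*} [Fintype V] [DecidableEq V] [MeasurableSpace V] [MeasurableSingletonClass V]
    (d : ℕ) (hd : 1 ≤ d)
    -- (i) π is m-measurable and pointwise a probability distribution on V
    (π : V → Ω → ℝ) (hπmeas : ∀ i, Measurable[m] (π i))
    (hπnn : ∀ i ω, 0 ≤ π i ω) (hπsum : ∀ ω, ∑ i, π i ω = 1)
    -- (ii) J is a random action with conditional law π given m
    (J : Ω → V) (hJ : Measurable J)
    (hJπ : ∀ j : V, μ[(fun ω => if J ω = j then (1 : ℝ) else 0) | m] =ᵐ[μ] π j)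
    -- (iii) S is m-measurable with j ∈ S j
    (S : V → Ω → Finset V) (hSmeas : ∀ i j : V, MeasurableSet[m] {ω | i ∈ S j ω})
    (hSself : ∀ j ω, j ∈ S j ω)
    -- (iv) θ is m-measurable and bounded
    (θ : V → Ω → Fin d → ℝ) (hθmeas : ∀ i, Measurable[m] (θ i))
    (hθbdd : ∀ i, ∃ C, ∀ ω, ‖θ i ω‖ ≤ C)
    -- (v) Y is bounded, independent of σ(m, J), with second-moment matrix Σ
    (Y : Ω → Fin d → ℝ) (hYmeas : Measurable Y) (hYbdd : ∃ C, ∀ ω, ‖Y ω‖ ≤ C)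
    (hYindep : Indep (m ⊔ MeasurableSpace.comap J inferInstance)
      (MeasurableSpace.comap Y inferInstance) μ)
    (Sig : Matrix (Fin d) (Fin d) ℝ) (hSigInv : IsUnit Sig.det)
    (hYcov : ∀ k l, ∫ ω, Y ω k * Y ω l ∂μ = Sig k l)
    -- (vi) X is m-measurable and bounded
    (X : Ω → Fin d → ℝ) (hXmeas : Measurable[m] X) (hXbdd : ∃ C, ∀ ω, ‖X ω‖ ≤ C)
    -- q(i), the implicit-exploration parameter β, and the IX estimator
    (q : V → Ω → ℝ)
    (hq : ∀ i ω, q i ω = ∑ j ∈ univ.filter (fun j => i ∈ S j ω), π j ω)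
    (β : ℝ) (hβ : 0 < β)
    (θhat : V → Ω → Fin d → ℝ)
    (hθhat : ∀ i ω, θhat i ω =
      (((if i ∈ S (J ω) ω then (1 : ℝ) else 0) / (q i ω + β)) * (∑ k, Y ω k * θ i ω k)) •
        Sig⁻¹.mulVec (Y ω)) :
    μ[(fun ω => ∑ i, π i ω * ∑ k, X ω k * θhat i ω k) | m]
      =ᵐ[μ] fun ω => (∑ i, π i ω * ∑ k, X ω k * θ i ω k)
        - β * ∑ i, (π i ω / (q i ω + β)) * ∑ k, X ω k * θ i ω k := by
  classical
  -- basic facts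
  have hπle : ∀ i ω, |π i ω| ≤ 1 := by
    intro i ω
    rw [abs_of_nonneg (hπnn i ω)]
    calc π i ω ≤ ∑ i', π i' ω := Finset.single_le_sum (fun j _ => hπnn j ω) (Finset.mem_univ i)
      _ = 1 := hπsum ω
  have hq0 : ∀ i ω, 0 ≤ q i ω := by
    intro i ω; rw [hq]; exact Finset.sum_nonneg fun j _ => hπnn j ω
  have hqβpos : ∀ i ω, 0 < q i ω + β := fun i ω => add_pos_of_nonneg_of_pos (hq0 i ω) hβ
  have hqm : ∀ i, Measurable[m] (q i) := by
    intro i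
    have hqi : q i = fun ω => ∑ j, if i ∈ S j ω then π j ω else 0 :=
      funext fun ω => by rw [hq i ω, Finset.sum_filter]
    rw [hqi]
    exact Finset.measurable_sum _ fun j _ =>
      Measurable.ite (hSmeas i j) (hπmeas j) measurable_const
  -- symmetry facts about Sig
  have hsymm : Sig.transpose = Sig := by
    ext k l
    rw [Matrix.transpose_apply, ← hYcov, ← hYcov]
    exact integral_congr_ae (ae_of_all _ fun ω => mul_comm _ _)
  have hNM : ∀ k l : Fin d, ∑ n, Sig⁻¹ l n * Sig k n = if k = l then (1:ℝ) else 0 := by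
    intro k l
    have hinv : Sig⁻¹.transpose = Sig⁻¹ := by
      rw [Matrix.transpose_nonsing_inv, hsymm]
    have : ∑ n, Sig⁻¹ l n * Sig k n = ∑ n, Sig k n * Sig⁻¹ n l := by
      refine Finset.sum_congr rfl fun n _ => ?_
      have h2 : Sig⁻¹ l n = Sig⁻¹ n l := by
        conv_lhs => rw [← hinv, Matrix.transpose_apply]
      rw [h2, mul_comm]
    rw [this, ← Matrix.mul_apply, Matrix.mul_nonsing_inv Sig hSigInv, Matrix.one_apply]
  -- bounds
  have hindb : ∀ (P : Ω → Prop) [DecidablePred P], ∃ C, ∀ ω, |if P ω then (1:ℝ) else 0| ≤ C := by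
    intro P _
    exact ⟨1, fun ω => by by_cases h : P ω <;> simp [h]⟩
  have hdivb : ∀ i, ∃ C, ∀ ω, |π i ω / (q i ω + β)| ≤ C := by
    intro i
    refine ⟨1 / β, fun ω => ?_⟩
    rw [abs_div, abs_of_pos (hqβpos i ω)]
    exact div_le_div₀ zero_le_one (hπle i ω) hβ (by linarith [hq0 i ω])
  have hθcb : ∀ i (k : Fin d), ∃ C, ∀ ω, |θ i ω k| ≤ C := by
    intro i k
    obtain ⟨C, hC⟩ := hθbdd i
    exact ⟨C, fun ω => le_trans (by simpa [Real.norm_eq_abs] using norm_le_pi_norm (θ i ω) k) (hC ω)⟩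
  have hXcb : ∀ (k : Fin d), ∃ C, ∀ ω, |X ω k| ≤ C := by
    intro k
    obtain ⟨C, hC⟩ := hXbdd
    exact ⟨C, fun ω => le_trans (by simpa [Real.norm_eq_abs] using norm_le_pi_norm (X ω) k) (hC ω)⟩
  have hYcb : ∀ (k : Fin d), ∃ C, ∀ ω, |Y ω k| ≤ C := by
    intro k
    obtain ⟨C, hC⟩ := hYbdd
    exact ⟨C, fun ω => le_trans (by simpa [Real.norm_eq_abs] using norm_le_pi_norm (Y ω) k) (hC ω)⟩
  -- the W functions and their properties
  have hWm : ∀ (j i : V) (k l n : Fin d), Measurable[m] (fun ω =>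
      (if i ∈ S j ω then (1:ℝ) else 0) * (π i ω / (q i ω + β)) * θ i ω k *
        (X ω l * Sig⁻¹ l n)) := by
    intro j i k l n
    exact (((Measurable.ite (hSmeas i j) measurable_const measurable_const).mul
      ((hπmeas i).div ((hqm i).add measurable_const))).mul
      ((measurable_pi_apply k).comp (hθmeas i))).mul
      (((measurable_pi_apply l).comp hXmeas).mul measurable_const)
  have hWb : ∀ (j i : V) (k l n : Fin d), ∃ C, ∀ ω, |(if i ∈ S j ω then (1:ℝ) else 0) *
      (π i ω / (q i ω + β)) * θ i ω k * (X ω l * Sig⁻¹ l n)| ≤ C := by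
    intro j i k l n
    exact bdd_mul'' (bdd_mul'' (bdd_mul'' (hindb _) (hdivb i)) (hθcb i k))
      (bdd_mul'' (hXcb l) ⟨|Sig⁻¹ l n|, fun _ => le_rfl⟩)
  -- key conditional expectation computation for each summand
  have key : ∀ p : V × V × Fin d × Fin d × Fin d,
      μ[(fun ω => ((if p.2.1 ∈ S p.1 ω then (1:ℝ) else 0) *
          (π p.2.1 ω / (q p.2.1 ω + β)) * θ p.2.1 ω p.2.2.1 *
          (X ω p.2.2.2.1 * Sig⁻¹ p.2.2.2.1 p.2.2.2.2)) *
        ((if J ω = p.1 then (1:ℝ) else 0) * (Y ω p.2.2.1 * Y ω p.2.2.2.2))) | m]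
      =ᵐ[μ] fun ω => ((if p.2.1 ∈ S p.1 ω then (1:ℝ) else 0) *
          (π p.2.1 ω / (q p.2.1 ω + β)) * θ p.2.1 ω p.2.2.1 *
          (X ω p.2.2.2.1 * Sig⁻¹ p.2.2.2.1 p.2.2.2.2)) *
        (π p.1 ω * Sig p.2.2.1 p.2.2.2.2) := by
    rintro ⟨j, i, k, l, n⟩
    have hJset : MeasurableSet[MeasurableSpace.comap J inferInstance] {ω | J ω = j} :=
      ⟨{j}, MeasurableSet.singleton j, rfl⟩
    have hfm : Measurable[m ⊔ MeasurableSpace.comap J inferInstance]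
        (fun ω => if J ω = j then (1:ℝ) else 0) := by
      refine Measurable.ite ?_ measurable_const measurable_const
      exact (le_sup_right : MeasurableSpace.comap J inferInstance ≤ _) _ hJset
    have hYc : Measurable[MeasurableSpace.comap Y inferInstance] Y :=
      measurable_iff_comap_le.mpr le_rfl
    have hgm : Measurable[MeasurableSpace.comap Y inferInstance]
        (fun ω => Y ω k * Y ω n) := by
      have hmul : Measurable (fun v : Fin d → ℝ => v k * v n) :=
        (measurable_pi_apply k).mul (measurable_pi_apply n)
      exact hmul.comp hYc
    exact keyCE m (MeasurableSpace.comap J inferInstance)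
      (MeasurableSpace.comap Y inferInstance) μ hm
      (le_trans (measurable_iff_comap_le.mp hJ) le_rfl)
      (le_trans (measurable_iff_comap_le.mp hYmeas) le_rfl)
      hYindep _ _ _ _ (hWm j i k l n) (hWb j i k l n) hfm (hindb _) hgm
      (bdd_mul'' (hYcb k) (hYcb n)) (hπmeas j) ⟨1, hπle j⟩ (hJπ j)
      (Sig k n) (hYcov k n)
  -- integrability of each summand
  have hGint : ∀ p : V × V × Fin d × Fin d × Fin d,
      Integrable (fun ω => ((if p.2.1 ∈ S p.1 ω then (1:ℝ) else 0) *
          (π p.2.1 ω / (q p.2.1 ω + β)) * θ p.2.1 ω p.2.2.1 *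
          (X ω p.2.2.2.1 * Sig⁻¹ p.2.2.2.1 p.2.2.2.2)) *
        ((if J ω = p.1 then (1:ℝ) else 0) * (Y ω p.2.2.1 * Y ω p.2.2.2.2))) μ := by
    rintro ⟨j, i, k, l, n⟩
    refine integrable_of_bdd' ?_ (bdd_mul'' (hWb j i k l n)
      (bdd_mul'' (hindb _) (bdd_mul'' (hYcb k) (hYcb n))))
    have hJF : Measurable[F] J := (measurable_iff_comap_le.mp hJ) |> measurable_iff_comap_le.mpr
    have hYF : Measurable[F] Y := (measurable_iff_comap_le.mp hYmeas) |> measurable_iff_comap_le.mpr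
    refine Measurable.mul (((hWm j i k l n).mono hm le_rfl)) ?_
    refine Measurable.mul ?_ (((measurable_pi_apply k).comp hYF).mul
      ((measurable_pi_apply n).comp hYF))
    exact Measurable.ite (hJF (MeasurableSet.singleton j)) measurable_const measurable_const
  -- rewrite the integrand as a big sum
  have h0 : (fun ω => ∑ i, π i ω * ∑ k, X ω k * θhat i ω k)
      = fun ω => ∑ p : V × V × Fin d × Fin d × Fin d,
          ((if p.2.1 ∈ S p.1 ω then (1:ℝ) else 0) *
            (π p.2.1 ω / (q p.2.1 ω + β)) * θ p.2.1 ω p.2.2.1 *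
            (X ω p.2.2.2.1 * Sig⁻¹ p.2.2.2.1 p.2.2.2.2)) *
          ((if J ω = p.1 then (1:ℝ) else 0) * (Y ω p.2.2.1 * Y ω p.2.2.2.2)) := by
    funext ω
    simp only [hθhat]
    exact alg1 Sig⁻¹ (fun i => π i ω) (fun i => q i ω + β) (X ω) (Y ω)
      (fun i k => θ i ω k) (fun i j => if i ∈ S j ω then (1:ℝ) else 0) (J ω)
  rw [h0]
  have hsum_fn : (fun ω => ∑ p : V × V × Fin d × Fin d × Fin d,
      ((if p.2.1 ∈ S p.1 ω then (1:ℝ) else 0) *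
        (π p.2.1 ω / (q p.2.1 ω + β)) * θ p.2.1 ω p.2.2.1 *
        (X ω p.2.2.2.1 * Sig⁻¹ p.2.2.2.1 p.2.2.2.2)) *
      ((if J ω = p.1 then (1:ℝ) else 0) * (Y ω p.2.2.1 * Y ω p.2.2.2.2)))
      = ∑ p : V × V × Fin d × Fin d × Fin d, (fun ω =>
        ((if p.2.1 ∈ S p.1 ω then (1:ℝ) else 0) *
          (π p.2.1 ω / (q p.2.1 ω + β)) * θ p.2.1 ω p.2.2.1 *
          (X ω p.2.2.2.1 * Sig⁻¹ p.2.2.2.1 p.2.2.2.2)) *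
        ((if J ω = p.1 then (1:ℝ) else 0) * (Y ω p.2.2.1 * Y ω p.2.2.2.2))) := by
    funext ω
    rw [Finset.sum_apply]
  rw [hsum_fn]
  refine (condExp_finset_sum (fun p _ => hGint p) m).trans ?_
  have hkey : ∀ᵐ ω ∂μ, ∀ p : V × V × Fin d × Fin d × Fin d,
      (μ[(fun ω => ((if p.2.1 ∈ S p.1 ω then (1:ℝ) else 0) *
          (π p.2.1 ω / (q p.2.1 ω + β)) * θ p.2.1 ω p.2.2.1 *
          (X ω p.2.2.2.1 * Sig⁻¹ p.2.2.2.1 p.2.2.2.2)) *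
        ((if J ω = p.1 then (1:ℝ) else 0) * (Y ω p.2.2.1 * Y ω p.2.2.2.2))) | m]) ω
      = ((if p.2.1 ∈ S p.1 ω then (1:ℝ) else 0) *
          (π p.2.1 ω / (q p.2.1 ω + β)) * θ p.2.1 ω p.2.2.1 *
          (X ω p.2.2.2.1 * Sig⁻¹ p.2.2.2.1 p.2.2.2.2)) *
        (π p.1 ω * Sig p.2.2.1 p.2.2.2.2) := by
    rw [ae_all_iff]
    exact key
  filter_upwards [hkey] with ω h
  rw [Finset.sum_apply]
  calc ∑ p : V × V × Fin d × Fin d × Fin d,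
      (μ[(fun ω => ((if p.2.1 ∈ S p.1 ω then (1:ℝ) else 0) *
          (π p.2.1 ω / (q p.2.1 ω + β)) * θ p.2.1 ω p.2.2.1 *
          (X ω p.2.2.2.1 * Sig⁻¹ p.2.2.2.1 p.2.2.2.2)) *
        ((if J ω = p.1 then (1:ℝ) else 0) * (Y ω p.2.2.1 * Y ω p.2.2.2.2))) | m]) ω
      = ∑ p : V × V × Fin d × Fin d × Fin d,
        ((if p.2.1 ∈ S p.1 ω then (1:ℝ) else 0) *
          (π p.2.1 ω / (q p.2.1 ω + β)) * θ p.2.1 ω p.2.2.1 *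
          (X ω p.2.2.2.1 * Sig⁻¹ p.2.2.2.1 p.2.2.2.2)) *
        (π p.1 ω * Sig p.2.2.1 p.2.2.2.2) := Finset.sum_congr rfl fun p _ => h p
    _ = (∑ i, π i ω * ∑ k, X ω k * θ i ω k)
        - β * ∑ i, (π i ω / (q i ω + β)) * ∑ k, X ω k * θ i ω k := by
      refine alg2 Sig⁻¹ Sig hNM (fun i => π i ω) (fun i => q i ω + β) (fun j => π j ω)
        (X ω) (fun i k => θ i ω k) (fun i j => if i ∈ S j ω then (1:ℝ) else 0) β
        (fun i => (hqβpos i ω).ne') (fun i => ?_)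
      have : ∑ j, (if i ∈ S j ω then (1:ℝ) else 0) * π j ω = q i ω := by
        rw [hq i ω, Finset.sum_filter]
        exact Finset.sum_congr rfl fun j _ => by by_cases hj : i ∈ S j ω <;> simp [hj]
      rw [this]
      ring
end

section
/- Let K ≥ 1 be an integer, γ ∈ (0,1), η > 0, and let w : {1,…,K} → ℝ satisfy w(i) > 0 for all i. Set W := Σ_{i=1}^K w(i) and π(i) := (1−γ)·w(i)/W + γ/K. Let z : {1,…,K} → ℝ satisfy |η·z(i)| ≤ 1 for every i. Then log(Σ_{i=1}^K (w(i)/W)·exp(−η·z(i))) ≤ Σ_{i=1}^K (π(i)/(1−γ))·(−η·z(i) + η²·z(i)²) + (η·γ/(K·(1−γ)))·Σ_{i=1}^K z(i). -/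
/-!
Write `p i = w i / W` and `x i = -(η z i)`. Since `log y ≤ y - 1` and `exp x ≤ 1 + x + x²` for
`|x| ≤ 1`, we get `log (∑ p i exp (x i)) ≤ ∑ p i (x i + x i²)`. In the right-hand side the uniform
exploration part `γ / K` of `π` contributes `-ηγ/(K(1-γ)) ∑ z i` to the linear terms, which the last
summand cancels exactly, and a nonnegative multiple of `∑ (η z i)²`, which can be dropped.
-/

open Finset

namespace Real

lemma exp_le_one_add_add_sq {x : ℝ} (hx : |x| ≤ 1) : exp x ≤ 1 + x + x ^ 2 := by
  have h := (le_abs_self _).trans (abs_exp_sub_one_sub_id_le hx)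
  linarith

lemma log_sum_mul_exp_le {ι : Type*} [Fintype ι] {p x : ι → ℝ} (hp : ∀ i, 0 ≤ p i)
    (hp1 : ∑ i, p i = 1) (hx : ∀ i, |x i| ≤ 1) :
    log (∑ i, p i * exp (x i)) ≤ ∑ i, p i * (x i + x i ^ 2) := by
  have hpos : 0 < ∑ i, p i * exp (x i) :=
    calc (0 : ℝ) < exp (-1) := exp_pos _
      _ = ∑ i, p i * exp (-1) := by rw [← sum_mul, hp1, one_mul]
      _ ≤ ∑ i, p i * exp (x i) := by
        gcongr with i
        · exact hp i
        · exact neg_le_of_abs_le (hx i)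
  calc log (∑ i, p i * exp (x i)) ≤ ∑ i, p i * exp (x i) - 1 := log_le_sub_one_of_pos hpos
    _ ≤ ∑ i, p i * (1 + x i + x i ^ 2) - 1 := by
        gcongr with i
        · exact hp i
        · exact exp_le_one_add_add_sq (hx i)
    _ = ∑ i, p i * (x i + x i ^ 2) := by
        simp only [mul_add, sum_add_distrib, mul_one, hp1]
        ring

end Real

theorem stmt6_general (K : ℕ) (hK : 1 ≤ K) (γ η : ℝ) (hγ0 : 0 < γ) (hγ1 : γ < 1)
    (w : Fin K → ℝ) (hw : ∀ i, 0 < w i)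
    (z : Fin K → ℝ) (hz : ∀ i, |η * z i| ≤ 1) :
    Real.log (∑ i, (w i / ∑ j, w j) * Real.exp (-(η * z i)))
      ≤ (∑ i, (((1 - γ) * w i / (∑ j, w j) + γ / K) / (1 - γ)) *
            (-(η * z i) + η ^ 2 * z i ^ 2))
        + η * γ / (K * (1 - γ)) * ∑ i, z i := by
  have : NeZero K := ⟨by omega⟩
  have hW : 0 < ∑ j, w j := sum_pos (fun i _ => hw i) univ_nonempty
  have hK0 : (K : ℝ) ≠ 0 := by positivity
  have hγ : 0 < 1 - γ := sub_pos.2 hγ1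
  have hpotential := Real.log_sum_mul_exp_le (p := fun i => w i / ∑ j, w j)
    (fun i => div_nonneg (hw i).le hW.le) (by rw [← sum_div, div_self hW.ne'])
    (fun i => (abs_neg _).trans_le (hz i))
  have hrhs : (∑ i, (((1 - γ) * w i / (∑ j, w j) + γ / K) / (1 - γ)) *
            (-(η * z i) + η ^ 2 * z i ^ 2)) + η * γ / (K * (1 - γ)) * ∑ i, z i
      = ∑ i, (w i / ∑ j, w j) * (-(η * z i) + (-(η * z i)) ^ 2)
        + γ / (K * (1 - γ)) * ∑ i, (η * z i) ^ 2 := by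
    simp only [mul_sum, ← sum_add_distrib]
    refine sum_congr rfl fun i _ => ?_
    field_simp
    ring
  rw [hrhs]
  exact hpotential.trans (le_add_of_nonneg_right (by positivity))

theorem stmt6 (K : ℕ) (hK : 1 ≤ K) (γ η : ℝ) (hγ0 : 0 < γ) (hγ1 : γ < 1) (hη : 0 < η)
    (w : Fin K → ℝ) (hw : ∀ i, 0 < w i)
    (z : Fin K → ℝ) (hz : ∀ i, |η * z i| ≤ 1) :
    Real.log (∑ i, (w i / ∑ j, w j) * Real.exp (-(η * z i)))
      ≤ (∑ i, (((1 - γ) * w i / (∑ j, w j) + γ / K) / (1 - γ)) *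
            (-(η * z i) + η ^ 2 * z i ^ 2))
        + η * γ / (K * (1 - γ)) * ∑ i, z i :=
  stmt6_general K hK γ η hγ0 hγ1 w hw z hz
end

section
/- Let T, K ≥ 1 be integers, η > 0, and γ ∈ (0,1). Let z : {1,…,T} → {1,…,K} → ℝ satisfy |η·z_t(i)| ≤ 1 for all t and i. Define weights w_t(i) := exp(−η·Σ_{s=1}^{t−1} z_s(i)), W_t := Σ_{i=1}^K w_t(i), and probabilities π_t(i) := (1−γ)·w_t(i)/W_t + γ/K. Then for every fixed action j ∈ {1,…,K}: Σ_{t=1}^T Σ_{i=1}^K π_t(i)·z_t(i) − Σ_{t=1}^T z_t(j) ≤ (1−γ)·(log K)/η + η·Σ_{t=1}^T Σ_{i=1}^K π_t(i)·z_t(i)² + γ·Σ_{t=1}^T ((1/K)·Σ_{i=1}^K z_t(i) − z_t(j)). -/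
open Finset

/-- Exponential weights: `wU T K η z t i = exp (-η ∑_{s < t} z s i)`. -/
noncomputable def wU (T K : ℕ) (η : ℝ) (z : Fin T → Fin K → ℝ) (t : Fin T) (i : Fin K) : ℝ :=
  Real.exp (-η * ∑ s ∈ univ.filter (fun s : Fin T => (s : ℕ) < (t : ℕ)), z s i)

/-!
With weights `w_t(i) = exp (-η ∑_{s<t} z_s(i))` and potential `Φ_t = log ∑_i w_t(i)`, one round
changes the potential by `log 𝔼_{p_t}[exp (-η z_t)] ≤ 𝔼_{p_t}[exp (-η z_t)] - 1`, and
`exp x ≤ 1 + x + x²` for `|x| ≤ 1` bounds this by `-η 𝔼_{p_t}[z_t] + η² 𝔼_{p_t}[z_t²]`.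
Telescoping from `Φ_0 = log K` to `Φ_T ≥ -η ∑_t z_t(j)` gives the regret bound of pure exponential
weights; mixing in the uniform distribution with weight `γ` scales it by `1 - γ` and adds `γ` times
the regret of the uniform distribution.
-/

lemma exp_le_one_add_add_sq {x : ℝ} (hx : |x| ≤ 1) : Real.exp x ≤ 1 + x + x ^ 2 := by
  linarith [(abs_le.mp (Real.abs_exp_sub_one_sub_id_le hx)).2]

lemma log_sum_mul_exp_sub_log_sum_le {ι : Type*} [Fintype ι] [Nonempty ι] {w x : ι → ℝ}
    (hw : ∀ i, 0 < w i) (hx : ∀ i, |x i| ≤ 1) :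
    Real.log (∑ i, w i * Real.exp (x i)) - Real.log (∑ i, w i)
      ≤ ∑ i, w i / (∑ k, w k) * (x i + x i ^ 2) := by
  set W := ∑ k, w k
  have hW : 0 < W := sum_pos (fun i _ => hw i) univ_nonempty
  have hnum : 0 < ∑ i, w i * Real.exp (x i) :=
    sum_pos (fun i _ => mul_pos (hw i) (Real.exp_pos _)) univ_nonempty
  have hbound : ∑ i, w i * Real.exp (x i) ≤ ∑ i, w i * (1 + x i + x i ^ 2) :=
    sum_le_sum fun i _ => mul_le_mul_of_nonneg_left (exp_le_one_add_add_sq (hx i)) (hw i).le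
  calc Real.log (∑ i, w i * Real.exp (x i)) - Real.log W
      = Real.log ((∑ i, w i * Real.exp (x i)) / W) := (Real.log_div hnum.ne' hW.ne').symm
    _ ≤ (∑ i, w i * Real.exp (x i)) / W - 1 := Real.log_le_sub_one_of_pos (div_pos hnum hW)
    _ ≤ (∑ i, w i * (1 + x i + x i ^ 2)) / W - 1 := by gcongr
    _ = ∑ i, w i / W * (x i + x i ^ 2) := by
      simp only [div_mul_eq_mul_div, ← sum_div, add_assoc, mul_add, mul_one, sum_add_distrib]
      field_simp
      ring

section ExpWeights

variable {ι : Type*} (η : ℝ) (z : ℕ → ι → ℝ)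

noncomputable def expWeight (t : ℕ) (i : ι) : ℝ :=
  Real.exp (-η * ∑ s ∈ range t, z s i)

noncomputable def expWeightProb [Fintype ι] (t : ℕ) (i : ι) : ℝ :=
  expWeight η z t i / ∑ k, expWeight η z t k

lemma expWeight_pos (t : ℕ) (i : ι) : 0 < expWeight η z t i := Real.exp_pos _

lemma expWeight_succ (t : ℕ) (i : ι) :
    expWeight η z (t + 1) i = expWeight η z t i * Real.exp (-η * z t i) := by
  rw [expWeight, expWeight, sum_range_succ, mul_add, Real.exp_add]

lemma log_sum_expWeight_succ_sub_le [Fintype ι] [Nonempty ι] {t : ℕ}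
    (hz : ∀ i, |η * z t i| ≤ 1) :
    Real.log (∑ i, expWeight η z (t + 1) i) - Real.log (∑ i, expWeight η z t i)
      ≤ -η * ∑ i, expWeightProb η z t i * z t i
        + η ^ 2 * ∑ i, expWeightProb η z t i * z t i ^ 2 := by
  have hx : ∀ i, |-η * z t i| ≤ 1 := fun i => by rw [neg_mul, abs_neg]; exact hz i
  simp only [expWeight_succ]
  refine (log_sum_mul_exp_sub_log_sum_le (expWeight_pos η z t) hx).trans_eq ?_
  simp only [mul_sum, ← sum_add_distrib, expWeightProb]
  exact sum_congr rfl fun i _ => by ring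

theorem expWeight_regret_le [Fintype ι] [Nonempty ι] (hη : 0 < η) {T : ℕ}
    (hz : ∀ t < T, ∀ i, |η * z t i| ≤ 1) (j : ι) :
    ∑ t ∈ range T, ∑ i, expWeightProb η z t i * z t i - ∑ t ∈ range T, z t j
      ≤ Real.log (Fintype.card ι) / η
        + η * ∑ t ∈ range T, ∑ i, expWeightProb η z t i * z t i ^ 2 := by
  set Φ : ℕ → ℝ := fun t => Real.log (∑ i, expWeight η z t i)
  have hΦ0 : Φ 0 = Real.log (Fintype.card ι) := by simp [Φ, expWeight]
  have hΦT : -η * ∑ t ∈ range T, z t j ≤ Φ T := by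
    rw [← Real.log_exp (-η * _)]
    exact Real.log_le_log (Real.exp_pos _)
      (single_le_sum (fun i _ => (expWeight_pos η z T i).le) (mem_univ j))
  have hstep : Φ T - Φ 0 ≤ ∑ t ∈ range T, (-η * ∑ i, expWeightProb η z t i * z t i
        + η ^ 2 * ∑ i, expWeightProb η z t i * z t i ^ 2) := by
    rw [← sum_range_sub]
    exact sum_le_sum fun t ht => log_sum_expWeight_succ_sub_le η z (hz t (mem_range.mp ht))
  rw [sum_add_distrib, ← mul_sum, ← mul_sum] at hstep
  rw [div_add' _ _ _ hη.ne', le_div_iff₀ hη]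
  linarith

end ExpWeights

lemma regret_mix_uniform_le {τ ι : Type*} [Fintype τ] [Fintype ι] {η γ R : ℝ} (hη : 0 ≤ η)
    (hγ0 : 0 ≤ γ) (hγ1 : γ ≤ 1) {p π z : τ → ι → ℝ}
    (hπ : ∀ t i, π t i = (1 - γ) * p t i + γ / Fintype.card ι) (j : ι)
    (hp : ∑ t, ∑ i, p t i * z t i - ∑ t, z t j ≤ R + η * ∑ t, ∑ i, p t i * z t i ^ 2) :
    ∑ t, ∑ i, π t i * z t i - ∑ t, z t j
      ≤ (1 - γ) * R + η * ∑ t, ∑ i, π t i * z t i ^ 2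
        + γ * ∑ t, ((1 / Fintype.card ι) * ∑ i, z t i - z t j) := by
  have hlin : ∑ t, ∑ i, π t i * z t i
      = (1 - γ) * ∑ t, ∑ i, p t i * z t i + γ * ((1 / Fintype.card ι) * ∑ t, ∑ i, z t i) := by
    simp only [hπ, add_mul, sum_add_distrib, mul_sum]
    congr 1 <;> exact sum_congr rfl fun t _ => sum_congr rfl fun i _ => by ring
  have hsq : (1 - γ) * ∑ t, ∑ i, p t i * z t i ^ 2 ≤ ∑ t, ∑ i, π t i * z t i ^ 2 := by
    rw [mul_sum]
    refine sum_le_sum fun t _ => ?_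
    rw [mul_sum]
    refine sum_le_sum fun i _ => ?_
    rw [hπ, add_mul, mul_assoc]
    have : 0 ≤ γ / Fintype.card ι * z t i ^ 2 := by positivity
    linarith
  have hunif : ∑ t, ((1 / Fintype.card ι) * ∑ i, z t i - z t j)
      = (1 / Fintype.card ι) * ∑ t, ∑ i, z t i - ∑ t, z t j := by
    rw [sum_sub_distrib, mul_sum]
  rw [hlin, hunif]
  linarith [mul_le_mul_of_nonneg_left hp (sub_nonneg.mpr hγ1), mul_le_mul_of_nonneg_left hsq hη]

lemma sum_filter_val_lt_eq_sum_range {M : Type*} [AddCommMonoid M] {T : ℕ} (f : ℕ → M)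
    (t : Fin T) : ∑ s ∈ univ.filter (fun s : Fin T => (s : ℕ) < t), f s = ∑ s ∈ range t, f s := by
  have hIio : univ.filter (fun s : Fin T => (s : ℕ) < t) = Iio t := by
    ext s; simp only [mem_filter, mem_univ, true_and, mem_Iio]; rfl
  rw [hIio, ← Nat.Iio_eq_range, ← Fin.map_valEmbedding_Iio, sum_map]
  rfl

theorem stmt12_general (T K : ℕ) (hK : 1 ≤ K) (η γ : ℝ) (hη : 0 < η)
    (hγ0 : 0 < γ) (hγ1 : γ < 1)
    (z : Fin T → Fin K → ℝ) (hz : ∀ t i, |η * z t i| ≤ 1) (j : Fin K)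
    (W : Fin T → ℝ) (hW : ∀ t, W t = ∑ i, wU T K η z t i)
    (π : Fin T → Fin K → ℝ)
    (hπ : ∀ t i, π t i = (1 - γ) * wU T K η z t i / W t + γ / K) :
    (∑ t, ∑ i, π t i * z t i) - ∑ t, z t j
      ≤ (1 - γ) * Real.log K / η + η * ∑ t, ∑ i, π t i * z t i ^ 2
          + γ * ∑ t, ((1 / K) * ∑ i, z t i - z t j) := by
  have : Nonempty (Fin K) := ⟨⟨0, hK⟩⟩
  set ze : ℕ → Fin K → ℝ := Function.extend Fin.val z 0
  have hze : ∀ t : Fin T, ze t = z t := Fin.val_injective.extend_apply z 0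
  have hwU : ∀ t i, wU T K η z t i = expWeight η ze t i := fun t i => by
    rw [wU, expWeight, ← sum_filter_val_lt_eq_sum_range (ze · i) t]
    simp only [hze]
  have hprob : ∀ t i, π t i = (1 - γ) * expWeightProb η ze t i + γ / Fintype.card (Fin K) :=
    fun t i => by simp only [hπ, hW, hwU, expWeightProb, Fintype.card_fin, mul_div_assoc]
  have hregret := expWeight_regret_le η ze hη (T := T)
    (fun t ht i => by simpa [← hze ⟨t, ht⟩] using hz ⟨t, ht⟩ i) j
  simp only [← Fin.sum_univ_eq_sum_range (fun t => ∑ i, expWeightProb η ze t i * ze t i),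
    ← Fin.sum_univ_eq_sum_range (fun t => ze t j),
    ← Fin.sum_univ_eq_sum_range (fun t => ∑ i, expWeightProb η ze t i * ze t i ^ 2),
    hze] at hregret
  have := regret_mix_uniform_le hη.le hγ0.le hγ1.le hprob j hregret
  simpa only [Fintype.card_fin, mul_div_assoc] using this

theorem stmt12 (T K : ℕ) (hT : 1 ≤ T) (hK : 1 ≤ K) (η γ : ℝ) (hη : 0 < η)
    (hγ0 : 0 < γ) (hγ1 : γ < 1)
    (z : Fin T → Fin K → ℝ) (hz : ∀ t i, |η * z t i| ≤ 1) (j : Fin K)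
    (W : Fin T → ℝ) (hW : ∀ t, W t = ∑ i, wU T K η z t i)
    (π : Fin T → Fin K → ℝ)
    (hπ : ∀ t i, π t i = (1 - γ) * wU T K η z t i / W t + γ / K) :
    (∑ t, ∑ i, π t i * z t i) - ∑ t, z t j
      ≤ (1 - γ) * Real.log K / η + η * ∑ t, ∑ i, π t i * z t i ^ 2
          + γ * ∑ t, ((1 / K) * ∑ i, z t i - z t j) :=
  stmt12_general T K hK η γ hη hγ0 hγ1 z hz j W hW π hπ
end

section
/- Let T, K ≥ 1 be integers and let η_1 ≥ η_2 ≥ … ≥ η_{T+1} > 0 be a nonincreasing sequence of positive learning rates. Let z : {1,…,T} → {1,…,K} → ℝ satisfy z_t(i) ≥ 0 for all t and i. Define w_t(i) := (1/K)·exp(−η_t·Σ_{s=1}^{t−1} z_s(i)), W_t := Σ_{i=1}^K w_t(i), and π_t(i) := w_t(i)/W_t. Then for every fixed action j ∈ {1,…,K}: Σ_{t=1}^T Σ_{i=1}^K π_t(i)·z_t(i) − Σ_{t=1}^T z_t(j) ≤ (log K)/η_{T+1} + Σ_{t=1}^T (η_t/2)·Σ_{i=1}^K π_t(i)·z_t(i)².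 -/
open Finset

/-- Exponential weights with time-varying learning rates:
`wIX T K η z t i = (1/K) * exp (-η_t ∑_{s < t} z s i)`. -/
noncomputable def wIX (T K : ℕ) (η : Fin (T + 1) → ℝ) (z : Fin T → Fin K → ℝ)
    (t : Fin T) (i : Fin K) : ℝ :=
  (1 / K) * Real.exp (-(η t.castSucc) *
    ∑ s ∈ univ.filter (fun s : Fin T => (s : ℕ) < (t : ℕ)), z s i)

/-!
With `Φ_t = (1/η_t) log ((1/K) ∑_i exp (-η_t L_t(i)))`, where `L_t` is the cumulative loss before
round `t`, we have `Φ_1 = 0` and `Φ_{T+1} ≥ -(log K)/η_{T+1} - L_{T+1}(j)`. Each round,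
`Φ_{t+1} - Φ_t ≤ -⟨π_t, z_t⟩ + (η_t/2) ⟨π_t, z_t²⟩`: replacing `η_{t+1}` by the larger `η_t`
can only increase the potential (Jensen), and the remaining increment is
`(1/η_t) log ∑_i π_t(i) exp (-η_t z_t(i))`, bounded by `exp (-x) ≤ 1 - x + x²/2` and
`log y ≤ y - 1`. Telescoping gives the bound.
-/

theorem Fin.sum_univ_succ_sub_castSucc {M : Type*} [AddCommGroup M] {n : ℕ}
    (f : Fin (n + 1) → M) :
    ∑ i : Fin n, (f i.succ - f i.castSucc) = f (Fin.last n) - f 0 := by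
  induction n with
  | zero => simp
  | succ n ih =>
    rw [Fin.sum_univ_castSucc]
    simp only [Fin.succ_castSucc]
    rw [ih (fun i => f i.castSucc)]
    simp

-- `(1 - x + x²/2)(1 + x + x²/2) = 1 + x⁴/4 ≥ 1`, and `1 + x + x²/2 ≤ exp x`.
theorem Real.exp_neg_le_one_sub_add_sq_div_two {x : ℝ} (hx : 0 ≤ x) :
    Real.exp (-x) ≤ 1 - x + x ^ 2 / 2 := by
  have hquad := Real.quadratic_le_exp_of_nonneg hx
  have hinv : Real.exp (-x) * Real.exp x = 1 := by
    rw [← Real.exp_add, neg_add_cancel, Real.exp_zero]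
  nlinarith [Real.exp_pos (-x), sq_nonneg (x ^ 2)]

section ExpWeightSum

variable {ι : Type*} [Fintype ι]

noncomputable def expWeightSum (w L : ι → ℝ) (a : ℝ) : ℝ :=
  ∑ i, w i * Real.exp (-a * L i)

noncomputable def gibbs (w L : ι → ℝ) (a : ℝ) (i : ι) : ℝ :=
  w i * Real.exp (-a * L i) / expWeightSum w L a

theorem expWeightSum_pos {w : ι → ℝ} (hw : ∀ i, 0 ≤ w i) (hw1 : ∑ i, w i = 1)
    (L : ι → ℝ) (a : ℝ) : 0 < expWeightSum w L a := by
  obtain ⟨i, -, hi⟩ := exists_ne_zero_of_sum_ne_zero (hw1 ▸ one_ne_zero : ∑ i, w i ≠ 0)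
  exact sum_pos' (fun j _ => by have := hw j; positivity)
    ⟨i, mem_univ i, mul_pos ((hw i).lt_of_ne' hi) (Real.exp_pos _)⟩

theorem gibbs_nonneg {w : ι → ℝ} (hw : ∀ i, 0 ≤ w i) (hw1 : ∑ i, w i = 1)
    (L : ι → ℝ) (a : ℝ) (i : ι) : 0 ≤ gibbs w L a i :=
  div_nonneg (mul_nonneg (hw i) (Real.exp_pos _).le) (expWeightSum_pos hw hw1 L a).le

theorem sum_gibbs {w L : ι → ℝ} {a : ℝ} (h : expWeightSum w L a ≠ 0) :
    ∑ i, gibbs w L a i = 1 := by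
  simp only [gibbs]
  rw [← sum_div, ← expWeightSum, div_self h]

theorem expWeightSum_add_eq_mul {w L : ι → ℝ} {a : ℝ} (h : expWeightSum w L a ≠ 0)
    (z : ι → ℝ) :
    expWeightSum w (L + z) a = expWeightSum w L a * expWeightSum (gibbs w L a) z a := by
  conv_lhs => rw [expWeightSum]
  conv_rhs => arg 2; rw [expWeightSum]
  rw [mul_sum]
  refine sum_congr rfl fun i _ => ?_
  simp only [gibbs, Pi.add_apply, mul_add, Real.exp_add]
  field_simp

theorem log_expWeightSum_le {p z : ι → ℝ} (hp : ∀ i, 0 ≤ p i) (hp1 : ∑ i, p i = 1)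
    (hz : ∀ i, 0 ≤ z i) {a : ℝ} (ha : 0 ≤ a) :
    Real.log (expWeightSum p z a)
      ≤ -a * ∑ i, p i * z i + a ^ 2 / 2 * ∑ i, p i * z i ^ 2 := by
  have hquad : expWeightSum p z a ≤ ∑ i, p i * (1 - a * z i + (a * z i) ^ 2 / 2) := by
    refine sum_le_sum fun i _ => mul_le_mul_of_nonneg_left ?_ (hp i)
    rw [← neg_mul_eq_neg_mul]
    exact Real.exp_neg_le_one_sub_add_sq_div_two (mul_nonneg ha (hz i))
  have hexpand : ∑ i, p i * (1 - a * z i + (a * z i) ^ 2 / 2)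
      = ∑ i, p i - a * ∑ i, p i * z i + a ^ 2 / 2 * ∑ i, p i * z i ^ 2 := by
    simp only [mul_sum, ← sum_sub_distrib, ← sum_add_distrib]
    exact sum_congr rfl fun i _ => by ring
  have hlog := Real.log_le_sub_one_of_pos (expWeightSum_pos hp hp1 z a)
  rw [hexpand, hp1] at hquad
  linarith

-- Jensen for the convex map `x ↦ x ^ (a / b)` gives `S_b ^ (a / b) ≤ S_a`.
theorem log_expWeightSum_div_le_of_le {w : ι → ℝ} (hw : ∀ i, 0 ≤ w i) (hw1 : ∑ i, w i = 1)
    (L : ι → ℝ) {a b : ℝ} (hb : 0 < b) (hba : b ≤ a) :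
    Real.log (expWeightSum w L b) / b ≤ Real.log (expWeightSum w L a) / a := by
  have ha : 0 < a := hb.trans_le hba
  have hpos := expWeightSum_pos hw hw1 L b
  have hjensen : expWeightSum w L b ^ (a / b) ≤ expWeightSum w L a := by
    have hpow (i : ι) : Real.exp (-b * L i) ^ (a / b) = Real.exp (-a * L i) := by
      rw [← Real.exp_mul]
      congr 1
      field_simp
    simp only [expWeightSum]
    simpa only [hpow] using Real.rpow_arith_mean_le_arith_mean_rpow univ w
      (fun i => Real.exp (-b * L i)) (fun i _ => hw i) hw1 (fun i _ => (Real.exp_pos _).le)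
      ((one_le_div hb).2 hba)
  have hlog := Real.log_le_log (by positivity) hjensen
  rw [Real.log_rpow hpos] at hlog
  calc Real.log (expWeightSum w L b) / b
      = a / b * Real.log (expWeightSum w L b) / a := by field_simp
    _ ≤ Real.log (expWeightSum w L a) / a := by gcongr

end ExpWeightSum

section Hedge

variable {T K : ℕ} {ι : Type*}

noncomputable def cumLoss (z : Fin T → ι → ℝ) (n : ℕ) (i : ι) : ℝ :=
  ∑ s ∈ univ.filter (fun s : Fin T => (s : ℕ) < n), z s i

theorem cumLoss_zero (z : Fin T → ι → ℝ) : cumLoss z 0 = 0 := by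
  ext i
  simp [cumLoss]

theorem cumLoss_succ (z : Fin T → ι → ℝ) (t : Fin T) :
    cumLoss z (t + 1) = cumLoss z t + z t := by
  ext i
  have hfilter : univ.filter (fun s : Fin T => (s : ℕ) < t + 1)
      = insert t (univ.filter (fun s : Fin T => (s : ℕ) < t)) := by
    ext s
    simp [le_iff_eq_or_lt, Fin.val_inj]
  simp only [cumLoss, hfilter, Pi.add_apply]
  rw [sum_insert (by simp), add_comm]

theorem cumLoss_self (z : Fin T → ι → ℝ) (i : ι) :
    cumLoss z T i = ∑ t, z t i := by
  simp [cumLoss]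

theorem sum_one_div_natCast (hK : 0 < K) : ∑ _i : Fin K, 1 / (K : ℝ) = 1 := by
  simp [(Nat.cast_pos.2 hK).ne']

noncomputable def potential (η : Fin (T + 1) → ℝ) (z : Fin T → Fin K → ℝ) (t : Fin (T + 1)) :
    ℝ :=
  Real.log (expWeightSum (fun _ => 1 / (K : ℝ)) (cumLoss z t) (η t)) / η t

noncomputable def hedgeDist (η : Fin (T + 1) → ℝ) (z : Fin T → Fin K → ℝ) (t : Fin T) :
    Fin K → ℝ :=
  gibbs (fun _ => 1 / (K : ℝ)) (cumLoss z t) (η t.castSucc)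

variable (η : Fin (T + 1) → ℝ) (z : Fin T → Fin K → ℝ)

theorem potential_zero (hK : 0 < K) : potential η z 0 = 0 := by
  simp only [potential, Fin.val_zero, cumLoss_zero, expWeightSum, Pi.zero_apply, mul_zero,
    Real.exp_zero, mul_one]
  rw [sum_one_div_natCast hK, Real.log_one, zero_div]

theorem neg_log_div_sub_le_potential_last (hη : 0 < η (Fin.last T)) (j : Fin K) :
    -(Real.log K / η (Fin.last T)) - ∑ t, z t j ≤ potential η z (Fin.last T) := by
  have hK : (0 : ℝ) < K := Nat.cast_pos.2 j.pos
  set a := η (Fin.last T)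
  have hterm : 1 / (K : ℝ) * Real.exp (-a * cumLoss z T j)
      ≤ expWeightSum (fun _ => 1 / (K : ℝ)) (cumLoss z T) a :=
    single_le_sum (f := fun i => 1 / (K : ℝ) * Real.exp (-a * cumLoss z T i))
      (fun i _ => by positivity) (mem_univ j)
  have hlog := Real.log_le_log (by positivity) hterm
  rw [Real.log_mul (by positivity) (Real.exp_pos _).ne', Real.log_exp,
    Real.log_div one_ne_zero hK.ne', Real.log_one, zero_sub, cumLoss_self] at hlog
  calc -(Real.log K / a) - ∑ t, z t j = (-Real.log K + -a * ∑ t, z t j) / a := by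
        field_simp
        ring
    _ ≤ potential η z (Fin.last T) := div_le_div_of_nonneg_right hlog hη.le

theorem potential_succ_sub_le (t : Fin T) (hz : ∀ i, 0 ≤ z t i) (hK : 0 < K)
    (hpos : 0 < η t.succ) (hle : η t.succ ≤ η t.castSucc) :
    potential η z t.succ - potential η z t.castSucc
      ≤ -∑ i, hedgeDist η z t i * z t i
          + η t.castSucc / 2 * ∑ i, hedgeDist η z t i * z t i ^ 2 := by
  set u : Fin K → ℝ := fun _ => 1 / (K : ℝ)
  set a := η t.castSucc
  have hu (i : Fin K) : 0 ≤ u i := by positivity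
  have hu1 : ∑ i, u i = 1 := sum_one_div_natCast hK
  have ha : 0 < a := hpos.trans_le hle
  have hS := expWeightSum_pos hu hu1 (cumLoss z t) a
  have hπ : ∀ i, 0 ≤ hedgeDist η z t i := gibbs_nonneg hu hu1 (cumLoss z t) a
  have hπ1 : ∑ i, hedgeDist η z t i = 1 := sum_gibbs hS.ne'
  have hP := expWeightSum_pos hπ hπ1 (z t) a
  have hrate : potential η z t.succ ≤ Real.log (expWeightSum u (cumLoss z (t + 1)) a) / a :=
    log_expWeightSum_div_le_of_le hu hu1 _ hpos hle
  have hsplit : expWeightSum u (cumLoss z (t + 1)) a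
      = expWeightSum u (cumLoss z t) a * expWeightSum (hedgeDist η z t) (z t) a := by
    rw [cumLoss_succ]
    exact expWeightSum_add_eq_mul hS.ne' (z t)
  have hround := log_expWeightSum_le hπ hπ1 hz ha.le
  rw [hsplit, Real.log_mul hS.ne' hP.ne', add_div] at hrate
  calc potential η z t.succ - potential η z t.castSucc
      ≤ Real.log (expWeightSum (hedgeDist η z t) (z t) a) / a := by
        change _ - Real.log (expWeightSum u (cumLoss z t) a) / a ≤ _
        linarith
    _ ≤ (-a * ∑ i, hedgeDist η z t i * z t i
          + a ^ 2 / 2 * ∑ i, hedgeDist η z t i * z t i ^ 2) / a :=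
        div_le_div_of_nonneg_right hround ha.le
    _ = _ := by field_simp

end Hedge

theorem stmt13_general (T K : ℕ)
    (η : Fin (T + 1) → ℝ) (hηpos : ∀ t, 0 < η t)
    (hηmono : ∀ s t : Fin (T + 1), s ≤ t → η t ≤ η s)
    (z : Fin T → Fin K → ℝ) (hz : ∀ t i, 0 ≤ z t i) (j : Fin K)
    (W : Fin T → ℝ) (hW : ∀ t, W t = ∑ i, wIX T K η z t i)
    (π : Fin T → Fin K → ℝ) (hπ : ∀ t i, π t i = wIX T K η z t i / W t) :
    (∑ t, ∑ i, π t i * z t i) - ∑ t, z t j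
      ≤ Real.log K / η (Fin.last T)
          + ∑ t, (η t.castSucc / 2) * ∑ i, π t i * z t i ^ 2 := by
  -- `wIX T K η z t i` unfolds to `1 / K * exp (-η t.castSucc * cumLoss z t i)`.
  obtain rfl : W = fun t : Fin T =>
      expWeightSum (fun _ => 1 / (K : ℝ)) (cumLoss z t) (η t.castSucc) := funext hW
  obtain rfl : π = hedgeDist η z := funext₂ hπ
  have hsteps := sum_le_sum fun t (_ : t ∈ univ) =>
    potential_succ_sub_le η z t (hz t) j.pos (hηpos _) (hηmono _ _ (Fin.castSucc_le_succ t))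
  rw [Fin.sum_univ_succ_sub_castSucc, potential_zero η z j.pos, sum_add_distrib,
    sum_neg_distrib] at hsteps
  linarith [neg_log_div_sub_le_potential_last η z (hηpos _) j]

theorem stmt13 (T K : ℕ) (hT : 1 ≤ T) (hK : 1 ≤ K)
    (η : Fin (T + 1) → ℝ) (hηpos : ∀ t, 0 < η t)
    (hηmono : ∀ s t : Fin (T + 1), s ≤ t → η t ≤ η s)
    (z : Fin T → Fin K → ℝ) (hz : ∀ t i, 0 ≤ z t i) (j : Fin K)
    (W : Fin T → ℝ) (hW : ∀ t, W t = ∑ i, wIX T K η z t i)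
    (π : Fin T → Fin K → ℝ) (hπ : ∀ t i, π t i = wIX T K η z t i / W t) :
    (∑ t, ∑ i, π t i * z t i) - ∑ t, z t j
      ≤ Real.log K / η (Fin.last T)
          + ∑ t, (η t.castSucc / 2) * ∑ i, π t i * z t i ^ 2 :=
  stmt13_general T K η hηpos hηmono z hz j W hW π hπ
end
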